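/- Let φ : ℝ → ℝ be continuously differentiable and strictly increasing, let a ∈ ℝ, l > 0, T ∈ ℝ, let s ≥ 1 and k ≥ 1 be integers, and for each p ∈ {1, …, k} let A_p < B_p satisfy φ^[p](A_p) = T and φ^[p](B_p) = T + 2l. If {f_n}_{n=0}^∞ is an orthonormal system in L²([a, a+2l]) (orthogonal with ∫_a^{a+2l} f_n(t)² dt = 1), then for every choice of indices p₁, …, p_s ∈ {1, …, k} the s-th generation functions f_n^{p₁,…,p_s} satisfy ∫_a^{a+2l} (f_n^{p₁,…,p_s}(t))² dt = ∏_{i=1}^{s} (2l/(B_{p_i} − A_{p_i})), and consequently the rescaled system { (∏_{i=1}^{s} √((B_{p_i} − A_{p_i})/(2l))) · f_n^{p₁,…,p_s} }_{n=0}^∞ is an orthonormal system in L²([a, a+2l]). -/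

import Mathlib

open MeasureTheory Set

/-- The affine map `ρ_p` sending `[a, a+2l]` onto `[A, B]`. -/
noncomputable def rhoMap (A B a l : ℝ) (t : ℝ) : ℝ := (B - A) / (2 * l) * (t - a) + A

/-- The map `u_p(t) = φ^[p](ρ_p(t)) − T + a`. -/
noncomputable def uMap (φ : ℝ → ℝ) (p : ℕ) (A B a l T : ℝ) (t : ℝ) : ℝ :=
  φ^[p] (rhoMap A B a l t) - T + a

/-- The weight `w_p(t) = ∏_{r=0}^{p−1} √(φ′(φ^[r](ρ_p(t))))`. -/
noncomputable def wMap (φ : ℝ → ℝ) (p : ℕ) (A B a l : ℝ) (t : ℝ) : ℝ :=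
  ∏ r ∈ Finset.range p, Real.sqrt (deriv φ (φ^[r] (rhoMap A B a l t)))

/-- The `s`-th generation transform
`f^{p₁,…,p_s}(t) = f(u_{p₁}(⋯ u_{p_s}(t) ⋯)) · ∏_{i=1}^{s} w_{p_i}(u_{p_{i+1}}(⋯ u_{p_s}(t) ⋯))`
for the list `[p₁, …, p_s]`, defined by the recursion
`gen (p :: ps) f = gen ps (fun x => f (u_p x) * w_p x)`. -/
noncomputable def gen (φ : ℝ → ℝ) (a l T : ℝ) (A B : ℕ → ℝ) : List ℕ → (ℝ → ℝ) → ℝ → ℝ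
  | [], f, t => f t
  | p :: ps, f, t =>
      gen φ a l T A B ps
        (fun x => f (uMap φ p (A p) (B p) a l T x) * wMap φ p (A p) (B p) a l x) t

/-
Each factor of a generation is a weighted change of variables: on `[a, a+2l]` the map `u_p`
is increasing from `a` to `a+2l` with derivative `((B_p − A_p)/(2l)) · w_p²`, because
`φ′ ≥ 0` and `w_p²` is exactly the chain-rule derivative of `φ^[p]` at `ρ_p(t)`. Hence
`∫ (g ∘ u_p · w_p)(h ∘ u_p · w_p) = (2l/(B_p − A_p)) ∫ g h`, and iterating over the list
`p₁, …, p_s` multiplies all inner products by `∏ 2l/(B_{p_i} − A_{p_i})`, which the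
rescaling cancels.
-/

theorem hasDerivAt_iterate {φ : ℝ → ℝ} (hφ : Differentiable ℝ φ) (p : ℕ) (x : ℝ) :
    HasDerivAt φ^[p] (∏ r ∈ Finset.range p, deriv φ (φ^[r] x)) x := by
  induction p with
  | zero => simpa using hasDerivAt_id x
  | succ n ih =>
    rw [Function.iterate_succ', Finset.prod_range_succ, mul_comm]
    exact (hφ _).hasDerivAt.comp x ih

section Generation

variable {φ : ℝ → ℝ} {p : ℕ} {A B a l T : ℝ}

theorem wMap_sq (hmono : Monotone φ) (t : ℝ) :
    wMap φ p A B a l t ^ 2 = ∏ r ∈ Finset.range p, deriv φ (φ^[r] (rhoMap A B a l t)) := by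
  rw [wMap, ← Finset.prod_pow]
  exact Finset.prod_congr rfl fun r _ => Real.sq_sqrt hmono.deriv_nonneg

theorem hasDerivAt_uMap (hφ : Differentiable ℝ φ) (hmono : Monotone φ) (t : ℝ) :
    HasDerivAt (uMap φ p A B a l T) ((B - A) / (2 * l) * wMap φ p A B a l t ^ 2) t := by
  have hρ : HasDerivAt (rhoMap A B a l) ((B - A) / (2 * l)) t := by
    have h := (((hasDerivAt_id' t).sub_const a).const_mul ((B - A) / (2 * l))).add_const A
    rwa [mul_one] at h
  rw [wMap_sq hmono, mul_comm]
  exact (((hasDerivAt_iterate hφ p _).comp t hρ).sub_const T).add_const a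

theorem uMap_left (hA : φ^[p] A = T) : uMap φ p A B a l T a = a := by
  simp [uMap, rhoMap, hA]

theorem uMap_right (hl : l ≠ 0) (hB : φ^[p] B = T + 2 * l) :
    uMap φ p A B a l T (a + 2 * l) = a + 2 * l := by
  have hρ : rhoMap A B a l (a + 2 * l) = B := by
    rw [rhoMap, add_sub_cancel_left, div_mul_cancel₀ _ (mul_ne_zero two_ne_zero hl)]
    ring
  rw [uMap, hρ, hB]
  ring

theorem integral_wMap_sq_mul_comp_uMap (hφ : Differentiable ℝ φ) (hmono : Monotone φ)
    (hl : 0 < l) (hA : φ^[p] A = T) (hB : φ^[p] B = T + 2 * l) (G : ℝ → ℝ) :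
    ∫ t in a..(a + 2 * l), wMap φ p A B a l t ^ 2 * G (uMap φ p A B a l T t)
      = 2 * l / (B - A) * ∫ x in a..(a + 2 * l), G x := by
  have hAB : A < B := (hmono.iterate p).reflect_lt (by rw [hA, hB]; linarith)
  have hc : 0 < (B - A) / (2 * l) := div_pos (sub_pos.2 hAB) (by positivity)
  have hab : a ≤ a + 2 * l := by linarith
  have hu (t : ℝ) :
      HasDerivAt (uMap φ p A B a l T) ((B - A) / (2 * l) * wMap φ p A B a l t ^ 2) t :=
    hasDerivAt_uMap hφ hmono t
  -- the substitution `x = u_p(t)` maps `[a, a+2l]` onto itself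
  have hsubst := integral_Icc_deriv_smul_of_deriv_nonneg (g := G)
    (continuous_iff_continuousAt.2 fun t => (hu t).continuousAt).continuousOn
    (fun t _ => hu t) (fun t _ => by positivity) hab
  rw [uMap_left hA, uMap_right hl.ne' hB] at hsubst
  simp only [intervalIntegral.integral_of_le hab, ← integral_Icc_eq_integral_Ioc,
    ← hsubst, smul_eq_mul, mul_assoc, integral_const_mul]
  field_simp [(sub_pos.2 hAB).ne']

theorem integral_gen_mul_gen (hφ : Differentiable ℝ φ) (hmono : Monotone φ) (hl : 0 < l)
    {A B : ℕ → ℝ} (ps : List ℕ)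
    (hps : ∀ p ∈ ps, φ^[p] (A p) = T ∧ φ^[p] (B p) = T + 2 * l) (g h : ℝ → ℝ) :
    ∫ t in a..(a + 2 * l), gen φ a l T A B ps g t * gen φ a l T A B ps h t
      = (ps.map fun p => 2 * l / (B p - A p)).prod * ∫ t in a..(a + 2 * l), g t * h t := by
  induction ps generalizing g h with
  | nil => simp [gen]
  | cons p ps ih =>
    obtain ⟨hA, hB⟩ := hps p List.mem_cons_self
    simp only [gen]
    rw [ih (fun q hq => hps q (List.mem_cons_of_mem p hq)), List.map_cons, List.prod_cons,
      mul_assoc (2 * l / _), mul_left_comm (2 * l / _),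
      ← integral_wMap_sq_mul_comp_uMap hφ hmono hl hA hB fun x => g x * h x]
    congr 1
    exact intervalIntegral.integral_congr fun t _ => by ring

end Generation

theorem List.prod_map_sqrt_sq_mul_prod_map_inv {ι : Type*} (c : ι → ℝ) (s : List ι)
    (hc : ∀ i ∈ s, 0 < c i) :
    (s.map fun i => √(c i)).prod ^ 2 * (s.map fun i => (c i)⁻¹).prod = 1 := by
  induction s with
  | nil => simp
  | cons i s ih =>
    simp only [List.map_cons, List.prod_cons, List.forall_mem_cons] at hc ⊢
    rw [mul_pow, mul_mul_mul_comm, Real.sq_sqrt hc.1.le, mul_inv_cancel₀ hc.1.ne', ih hc.2,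
      one_mul]

theorem sth_generation_orthonormal_general
    (φ : ℝ → ℝ) (hφ : ContDiff ℝ 1 φ) (hmono : StrictMono φ)
    (a l T : ℝ) (hl : 0 < l) (k : ℕ)
    (A B : ℕ → ℝ)
    (hAB : ∀ p, 1 ≤ p → p ≤ k →
      A p < B p ∧ φ^[p] (A p) = T ∧ φ^[p] (B p) = T + 2 * l)
    (f : ℕ → ℝ → ℝ)
    (horth : ∀ m n, m ≠ n → ∫ t in a..(a + 2 * l), f m t * f n t = 0)
    (hnorm : ∀ n, ∫ t in a..(a + 2 * l), (f n t) ^ 2 = 1)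
    (ps : List ℕ) (hps : ∀ p ∈ ps, 1 ≤ p ∧ p ≤ k) :
    (∀ n, ∫ t in a..(a + 2 * l), (gen φ a l T A B ps (f n) t) ^ 2
        = (ps.map (fun p => 2 * l / (B p - A p))).prod) ∧
    (∀ m n, m ≠ n →
      ∫ t in a..(a + 2 * l),
        ((ps.map (fun p => Real.sqrt ((B p - A p) / (2 * l)))).prod *
            gen φ a l T A B ps (f m) t) *
        ((ps.map (fun p => Real.sqrt ((B p - A p) / (2 * l)))).prod *
            gen φ a l T A B ps (f n) t) = 0) ∧
    (∀ n, ∫ t in a..(a + 2 * l),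
        ((ps.map (fun p => Real.sqrt ((B p - A p) / (2 * l)))).prod *
            gen φ a l T A B ps (f n) t) ^ 2 = 1) := by
  have hAB' (p) (hp : p ∈ ps) := hAB p (hps p hp).1 (hps p hp).2
  have key := integral_gen_mul_gen (a := a) (hφ.differentiable one_ne_zero) hmono.monotone hl ps
    fun p hp => (hAB' p hp).2
  set C := (ps.map fun p => √((B p - A p) / (2 * l))).prod
  set D := (ps.map fun p => 2 * l / (B p - A p)).prod
  have hCD : C ^ 2 * D = 1 := by
    simpa only [inv_div] using List.prod_map_sqrt_sq_mul_prod_map_inv _ ps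
      fun p hp => div_pos (sub_pos.2 (hAB' p hp).1) (by positivity)
  have hscaled (m n : ℕ) : ∫ t in a..(a + 2 * l),
      (C * gen φ a l T A B ps (f m) t) * (C * gen φ a l T A B ps (f n) t)
        = ∫ t in a..(a + 2 * l), f m t * f n t := by
    rw [← one_mul (∫ t in a..(a + 2 * l), f m t * f n t), ← hCD, mul_assoc, ← key,
      ← intervalIntegral.integral_const_mul]
    congr 1
    ext t
    ring
  simp only [sq (gen _ _ _ _ _ _ _ _ _), sq (C * _), sq (f _ _)] at hnorm ⊢
  exact ⟨fun n => by rw [key, hnorm, mul_one], fun m n hmn => by rw [hscaled, horth m n hmn],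
    fun n => by rw [hscaled, hnorm]⟩

/-- If `{f_n}` is an orthonormal system in `L²([a, a+2l])`, then the
`s`-th generation functions have squared norm `∏_{i=1}^{s} (2l/(B_{p_i} − A_{p_i}))`, and
so the rescaled system `(∏_{i=1}^{s} √((B_{p_i} − A_{p_i})/(2l))) · f_n^{p₁,…,p_s}` is an
orthonormal system in `L²([a, a+2l])`. -/
theorem sth_generation_orthonormal
    (φ : ℝ → ℝ) (hφ : ContDiff ℝ 1 φ) (hmono : StrictMono φ)
    (a l T : ℝ) (hl : 0 < l) (s k : ℕ) (hs : 1 ≤ s) (hk : 1 ≤ k)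
    (A B : ℕ → ℝ)
    (hAB : ∀ p, 1 ≤ p → p ≤ k →
      A p < B p ∧ φ^[p] (A p) = T ∧ φ^[p] (B p) = T + 2 * l)
    (f : ℕ → ℝ → ℝ)
    (hf : ∀ n, MemLp (f n) 2 (volume.restrict (Set.Ioc a (a + 2 * l))))
    (horth : ∀ m n, m ≠ n → ∫ t in a..(a + 2 * l), f m t * f n t = 0)
    (hnorm : ∀ n, ∫ t in a..(a + 2 * l), (f n t) ^ 2 = 1)
    (ps : List ℕ) (hlen : ps.length = s) (hps : ∀ p ∈ ps, 1 ≤ p ∧ p ≤ k) :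
    (∀ n, ∫ t in a..(a + 2 * l), (gen φ a l T A B ps (f n) t) ^ 2
        = (ps.map (fun p => 2 * l / (B p - A p))).prod) ∧
    (∀ m n, m ≠ n →
      ∫ t in a..(a + 2 * l),
        ((ps.map (fun p => Real.sqrt ((B p - A p) / (2 * l)))).prod *
            gen φ a l T A B ps (f m) t) *
        ((ps.map (fun p => Real.sqrt ((B p - A p) / (2 * l)))).prod *
            gen φ a l T A B ps (f n) t) = 0) ∧
    (∀ n, ∫ t in a..(a + 2 * l),
        ((ps.map (fun p => Real.sqrt ((B p - A p) / (2 * l)))).prod *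
            gen φ a l T A B ps (f n) t) ^ 2 = 1) :=
  sth_generation_orthonormal_general φ hφ hmono a l T hl k A B hAB f horth hnorm ps hps
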